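/- For every even positive integer n, (n² + 2)/3 ≤ U(n) ≤ (n² + n)/3, with equality on the left iff n = 2^m for some m ≥ 1, and equality on the right iff n = 2^m - 2 for some m ≥ 2. -/
import Mathlib


open Finset

/-- The largest odd divisor of `k`. -/
def oddPart (k : ℕ) : ℕ := ordCompl[2] k

/-- `V n = ∑_{k=1}^n α(k)/k` as a rational number. -/
def V (n : ℕ) : ℚ := ∑ k ∈ Finset.Icc 1 n, (oddPart k : ℚ) / k

/-- `v n = V n - 2n/3`. -/
def v (n : ℕ) : ℚ := V n - 2 * n / 3

/-- `U n = ∑_{k=1}^n α(k)`. -/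
def U (n : ℕ) : ℕ := ∑ k ∈ Finset.Icc 1 n, oddPart k

/-- `G n = ∑_{k=1}^n (n+1-k)·α(k)/k` as a rational number. -/
def G (n : ℕ) : ℚ := ∑ k ∈ Finset.Icc 1 n, ((n : ℚ) + 1 - k) * (oddPart k : ℚ) / k

/-- `g n = n(n+2)/3 - G n`. -/
def g (n : ℕ) : ℚ := n * (n + 2) / 3 - G n

lemma oddPart_odd {k : ℕ} (h : Odd k) : oddPart k = k := by
  unfold oddPart
  rw [Nat.factorization_eq_zero_of_not_dvd (by rw [Nat.two_dvd_ne_zero, Nat.odd_iff.mp h])]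
  simp

lemma oddPart_two_mul (k : ℕ) : oddPart (2 * k) = oddPart k := by
  unfold oddPart
  rw [Nat.ordCompl_mul]
  norm_num

lemma U_succ (n : ℕ) : U (n + 1) = U n + oddPart (n + 1) := by
  unfold U
  rw [Finset.sum_Icc_succ_top (by omega)]

lemma U_two_mul (m : ℕ) : U (2 * m) = m ^ 2 + U m := by
  induction m with
  | zero => simp [U]
  | succ m ih =>
    have h1 : 2 * (m + 1) = (2 * m + 1) + 1 := by ring
    rw [h1, U_succ, U_succ, ih, oddPart_odd ⟨m, by ring⟩, U_succ]
    have h2 : 2 * m + 1 + 1 = 2 * (m + 1) := by ring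
    rw [h2, oddPart_two_mul]
    ring

lemma lemA : ∀ n : ℕ, 1 ≤ n → (n ^ 2 + 2 ≤ 3 * U n ∧ (3 * U n = n ^ 2 + 2 ↔ ∃ m : ℕ, n = 2 ^ m)) := by
  intro n
  induction n using Nat.strong_induction_on with
  | _ n ih =>
  intro hn
  rcases Nat.even_or_odd n with he | ho
  · obtain ⟨m, hm⟩ := he
    have hm2 : n = 2 * m := by omega
    have hm1 : 1 ≤ m := by omega
    obtain ⟨ihA, ihE⟩ := ih m (by omega) hm1
    subst hm2
    rw [U_two_mul]
    refine ⟨by nlinarith, ?_, ?_⟩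
    · intro h
      obtain ⟨k, hk⟩ := ihE.mp (by nlinarith)
      exact ⟨k + 1, by rw [hk]; ring⟩
    · rintro ⟨j, hj⟩
      cases j with
      | zero => rw [pow_zero] at hj; omega
      | succ j' =>
        rw [pow_succ] at hj
        have := ihE.mpr ⟨j', by omega⟩
        nlinarith
  · obtain ⟨m, hm⟩ := ho
    rcases Nat.eq_zero_or_pos m with rfl | hm1
    · have hn1 : n = 1 := by omega
      subst hn1
      have hU1 : U 1 = 1 := by simp [U, oddPart]
      exact ⟨by omega, fun _ => ⟨0, rfl⟩, fun _ => by omega⟩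
    have hmn : n = 2 * m + 1 := by omega
    subst hmn
    obtain ⟨ihA, _⟩ := ih m (by omega) hm1
    have hU : U (2 * m + 1) = m ^ 2 + U m + (2 * m + 1) := by
      rw [U_succ, U_two_mul, oddPart_odd ⟨m, by ring⟩]
    rw [hU]
    refine ⟨by nlinarith, ?_, ?_⟩
    · intro h; exfalso; nlinarith
    · rintro ⟨j, hj⟩
      cases j with
      | zero => rw [pow_zero] at hj; omega
      | succ j' => rw [pow_succ] at hj; omega

lemma lemB : ∀ n : ℕ, 1 ≤ n → (3 * U n ≤ n ^ 2 + 2 * n ∧ (3 * U n = n ^ 2 + 2 * n ↔ ∃ m : ℕ, 1 ≤ m ∧ n = 2 ^ m - 1)) := by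
  intro n
  induction n using Nat.strong_induction_on with
  | _ n ih =>
  intro hn
  rcases Nat.even_or_odd n with he | ho
  · obtain ⟨m, hm⟩ := he
    have hm2 : n = 2 * m := by omega
    have hm1 : 1 ≤ m := by omega
    obtain ⟨ihA, _⟩ := ih m (by omega) hm1
    subst hm2
    rw [U_two_mul]
    refine ⟨by nlinarith, ?_, ?_⟩
    · intro h; exfalso; nlinarith
    · rintro ⟨j, hj1, hj⟩
      exfalso
      obtain ⟨j', rfl⟩ : ∃ j', j = j' + 1 := ⟨j - 1, by omega⟩
      rw [pow_succ] at hj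
      have := Nat.one_le_two_pow (n := j')
      omega
  · obtain ⟨m, hm⟩ := ho
    rcases Nat.eq_zero_or_pos m with rfl | hm1
    · have hn1 : n = 1 := by omega
      subst hn1
      have hU1 : U 1 = 1 := by simp [U, oddPart]
      exact ⟨by omega, fun _ => ⟨1, by norm_num⟩, fun _ => by omega⟩
    have hmn : n = 2 * m + 1 := by omega
    subst hmn
    obtain ⟨ihA, ihE⟩ := ih m (by omega) hm1
    have hU : U (2 * m + 1) = m ^ 2 + U m + (2 * m + 1) := by
      rw [U_succ, U_two_mul, oddPart_odd ⟨m, by ring⟩]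
    rw [hU]
    refine ⟨by nlinarith, ?_, ?_⟩
    · intro h
      obtain ⟨k, hk1, hk⟩ := ihE.mp (by nlinarith)
      refine ⟨k + 1, by omega, ?_⟩
      rw [pow_succ]
      have := Nat.one_le_two_pow (n := k)
      omega
    · rintro ⟨j, hj1, hj⟩
      obtain ⟨j', rfl⟩ : ∃ j', j = j' + 1 := ⟨j - 1, by omega⟩
      rw [pow_succ] at hj
      have h1 := Nat.one_le_two_pow (n := j')
      have hj'1 : 1 ≤ j' := by
        rcases Nat.eq_zero_or_pos j' with rfl | h; · simp at hj; omega
        exact h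
      have := ihE.mpr ⟨j', hj'1, by omega⟩
      nlinarith

theorem stmt11 (n : ℕ) (hn : 0 < n) (hev : Even n) :
    (((n : ℚ) ^ 2 + 2) / 3 ≤ (U n : ℚ) ∧ (U n : ℚ) ≤ ((n : ℚ) ^ 2 + n) / 3) ∧
      ((U n : ℚ) = ((n : ℚ) ^ 2 + 2) / 3 ↔ ∃ m : ℕ, 1 ≤ m ∧ n = 2 ^ m) ∧
      ((U n : ℚ) = ((n : ℚ) ^ 2 + n) / 3 ↔ ∃ m : ℕ, 2 ≤ m ∧ n = 2 ^ m - 2) := by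
  obtain ⟨w, hw⟩ := hev
  have hw2 : n = 2 * w := by omega
  subst hw2
  have hw1 : 1 ≤ w := by omega
  obtain ⟨hA, hAe⟩ := lemA (2 * w) hn
  obtain ⟨hBw, hBwe⟩ := lemB w hw1
  have hUn : U (2 * w) = w ^ 2 + U w := U_two_mul w
  have N1 : (2 * w) ^ 2 + 2 ≤ U (2 * w) * 3 := by omega
  have N2 : U (2 * w) * 3 ≤ (2 * w) ^ 2 + 2 * w := by nlinarith
  have N3 : U (2 * w) * 3 = (2 * w) ^ 2 + 2 ↔ ∃ m : ℕ, 1 ≤ m ∧ 2 * w = 2 ^ m := by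
    rw [show U (2 * w) * 3 = 3 * U (2 * w) by ring, hAe]
    constructor
    · rintro ⟨m, hm⟩
      cases m with
      | zero => rw [pow_zero] at hm; omega
      | succ k => exact ⟨k + 1, by omega, hm⟩
    · rintro ⟨m, _, hm⟩; exact ⟨m, hm⟩
  have N4 : U (2 * w) * 3 = (2 * w) ^ 2 + 2 * w ↔ ∃ m : ℕ, 2 ≤ m ∧ 2 * w = 2 ^ m - 2 := by
    have hiff : U (2 * w) * 3 = (2 * w) ^ 2 + 2 * w ↔ 3 * U w = w ^ 2 + 2 * w := by
      rw [hUn]; constructor <;> intro h <;> nlinarith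
    rw [hiff, hBwe]
    constructor
    · rintro ⟨k, hk1, hk⟩
      refine ⟨k + 1, by omega, ?_⟩
      rw [pow_succ]
      have := Nat.one_le_two_pow (n := k)
      omega
    · rintro ⟨m, hm2, hm⟩
      obtain ⟨k, rfl⟩ : ∃ k, m = k + 1 := ⟨m - 1, by omega⟩
      rw [pow_succ] at hm
      have := Nat.one_le_two_pow (n := k)
      exact ⟨k, by omega, by omega⟩
  have C1 : ((U (2 * w) : ℚ) = (((2 * w : ℕ) : ℚ) ^ 2 + 2) / 3) ↔ U (2 * w) * 3 = (2 * w) ^ 2 + 2 := by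
    rw [eq_div_iff (by norm_num : (3 : ℚ) ≠ 0)]
    exact_mod_cast Iff.rfl
  have C2 : ((U (2 * w) : ℚ) = (((2 * w : ℕ) : ℚ) ^ 2 + ((2 * w : ℕ) : ℚ)) / 3) ↔ U (2 * w) * 3 = (2 * w) ^ 2 + 2 * w := by
    rw [eq_div_iff (by norm_num : (3 : ℚ) ≠ 0)]
    constructor
    · intro h; exact_mod_cast h
    · intro h; exact_mod_cast h
  refine ⟨⟨?_, ?_⟩, C1.trans N3, C2.trans N4⟩
  · rw [div_le_iff₀ (by norm_num : (0 : ℚ) < 3)]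
    exact_mod_cast N1
  · rw [le_div_iff₀ (by norm_num : (0 : ℚ) < 3)]
    exact_mod_cast N2
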